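/- arXiv:1403.4337 — 8 statements merged into one kernel-verified Lean document; each statement's English description precedes it below -/
import Mathlib

section
/- For every admissible pair (g,m), the cone C_{g,m} is contained in the antidominant Weyl chamber −𝒲 = {(a_1,…,a_n) ∈ ℚ^n : a_1 ≤ a_2 ≤ ⋯ ≤ a_n}; that is, if (a_1,…,a_n) ∈ ℚ^n satisfies 0 ≤ ε(1)·a_{g(1)} ≤ ε(2)·a_{g(2)} ≤ ⋯ ≤ ε(n)·a_{g(n)}, then a_1 ≤ a_2 ≤ ⋯ ≤ a_n. -/
/-- For every admissible pair `(g, m)` (with `g` a permutation of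
`{1,…,n}` and `0 ≤ m ≤ n`), the cone `C_{g,m}` is contained in the antidominant Weyl
chamber `{a ∈ ℚ^n : a₁ ≤ a₂ ≤ ⋯ ≤ aₙ}`.  Here indices are `0`-based: the value
`g(i) ∈ {1,…,m}` of the paper corresponds to `(g i).val < m`, and
`ε i = -1` if `(g i).val < m`, `ε i = 1` otherwise. -/
theorem stmt0 (n m : ℕ) (hn : 1 ≤ n) (hm : m ≤ n) (g : Equiv.Perm (Fin n))
    (hadm : ∀ i j : Fin n, i < j →
      (((g i).val < m → (g j).val < m → (g j).val < (g i).val) ∧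
       (m ≤ (g i).val → m ≤ (g j).val → (g i).val < (g j).val)))
    (a : Fin n → ℚ)
    (ε : Fin n → ℚ) (hε : ∀ i, ε i = if (g i).val < m then -1 else 1)
    (h0 : 0 ≤ ε ⟨0, hn⟩ * a (g ⟨0, hn⟩))
    (hchain : ∀ i j : Fin n, i ≤ j → ε i * a (g i) ≤ ε j * a (g j)) :
    ∀ i j : Fin n, i ≤ j → a i ≤ a j := by
  intro i j hij
  rcases eq_or_lt_of_le hij with rfl | hij
  · exact le_refl _
  have hijv : i.val < j.val := hij
  set p := g.symm i with hp
  set q := g.symm j with hq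
  have hgp : g p = i := g.apply_symm_apply i
  have hgq : g q = j := g.apply_symm_apply j
  have hpq : p ≠ q := by
    intro h
    rw [hp, hq] at h
    exact absurd (g.symm.injective h) (ne_of_lt hij)
  have hnonneg : ∀ k : Fin n, 0 ≤ ε k * a (g k) := fun k =>
    le_trans h0 (hchain ⟨0, hn⟩ k (by exact Nat.zero_le _))
  by_cases hi : i.val < m
  · by_cases hj : j.val < m
    · have hqp : q < p := by
        rcases lt_trichotomy p q with h | h | h
        · have := (hadm p q h).1 (by rw [hgp]; exact hi) (by rw [hgq]; exact hj)
          rw [hgp, hgq] at this; omega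
        · exact absurd h hpq
        · exact h
      have := hchain q p (le_of_lt hqp)
      rw [hε p, hε q, hgp, hgq, if_pos hi, if_pos hj] at this
      linarith
    · have h1 : a i ≤ 0 := by
        have := hnonneg p
        rw [hε p, hgp, if_pos hi] at this; linarith
      have h2 : 0 ≤ a j := by
        have := hnonneg q
        rw [hε q, hgq, if_neg hj] at this; linarith
      linarith
  · by_cases hj : j.val < m
    · omega
    · have hpq' : p < q := by
        rcases lt_trichotomy p q with h | h | h
        · exact h
        · exact absurd h hpq
        · have := (hadm q p h).2 (by rw [hgq]; omega) (by rw [hgp]; omega)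
          rw [hgp, hgq] at this; omega
      have := hchain p q (le_of_lt hpq')
      rw [hε p, hε q, hgp, hgq, if_neg hi, if_neg hj] at this
      linarith
end

section
/- Every point of the antidominant Weyl chamber lies in one of the cones C_{g,m}: for every (a_1,…,a_n) ∈ ℚ^n with a_1 ≤ a_2 ≤ ⋯ ≤ a_n there exist a permutation g of {1,…,n} and an integer m with 0 ≤ m ≤ n such that the pair (g,m) is admissible and 0 ≤ ε(1)·a_{g(1)} ≤ ε(2)·a_{g(2)} ≤ ⋯ ≤ ε(n)·a_{g(n)}. Consequently the chamber {a ∈ ℚ^n : a_1 ≤ ⋯ ≤ a_n} is the union of the cones C_{g,m} over all admissible pairs. -/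
/-- Every point of the antidominant Weyl chamber
`{a ∈ ℚ^n : a₁ ≤ ⋯ ≤ aₙ}` lies in one of the cones `C_{g,m}` for an admissible
pair `(g, m)`.  Indices are `0`-based: `g(i) ∈ {1,…,m}` of the paper corresponds
to `(g i).val < m`, and `ε i = -1` if `(g i).val < m`, `ε i = 1` otherwise. -/
theorem stmt1 (n : ℕ) (hn : 1 ≤ n) (a : Fin n → ℚ)
    (ha : ∀ i j : Fin n, i ≤ j → a i ≤ a j) :
    ∃ (g : Equiv.Perm (Fin n)) (m : ℕ), m ≤ n ∧
      (∀ i j : Fin n, i < j →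
        (((g i).val < m → (g j).val < m → (g j).val < (g i).val) ∧
         (m ≤ (g i).val → m ≤ (g j).val → (g i).val < (g j).val))) ∧
      0 ≤ (if (g ⟨0, hn⟩).val < m then (-1 : ℚ) else 1) * a (g ⟨0, hn⟩) ∧
      (∀ i j : Fin n, i ≤ j →
        (if (g i).val < m then (-1 : ℚ) else 1) * a (g i) ≤
          (if (g j).val < m then (-1 : ℚ) else 1) * a (g j)) := by
  classical
  -- m = least index where a becomes nonnegative (or n if none)
  have hP : ∃ k, k = n ∨ ∃ h : k < n, 0 ≤ a ⟨k, h⟩ := ⟨n, Or.inl rfl⟩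
  set m := Nat.find hP with hm
  have hmn : m ≤ n := by
    by_contra h
    rcases Nat.find_spec hP with h' | ⟨hk, _⟩
    · exact h (le_of_eq h')
    · exact h hk.le
  -- characterization : i.val < m ↔ a i < 0
  have hchar : ∀ i : Fin n, i.val < m ↔ a i < 0 := by
    intro i
    constructor
    · intro hi
      have := Nat.find_min hP hi
      push_neg at this
      have h2 := this.2 i.isLt
      simpa using h2
    · intro hai
      by_contra h
      push_neg at h
      rcases Nat.find_spec hP with h' | ⟨hk, hk0⟩
      · have := i.isLt; omega
      · have : a ⟨m, hk⟩ ≤ a i := ha ⟨m, hk⟩ i h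
        linarith
  -- sorting key
  set key : Fin n → ℚ ×ₗ ℤ :=
    fun i => toLex (|a i|, if a i < 0 then -(i.val : ℤ) else (i.val : ℤ)) with hkey
  set g := Tuple.sort key with hg
  have hmono := Tuple.monotone_sort key
  refine ⟨g, m, hmn, ?_, ?_, ?_⟩
  · intro i j hij
    have hle : key (g i) ≤ key (g j) := hmono hij.le
    have hne : g i ≠ g j := fun h => hij.ne (g.injective h)
    rw [hkey] at hle
    rw [Prod.Lex.le_iff] at hle
    constructor
    · intro h1 h2
      have ha1 : a (g i) < 0 := (hchar _).mp h1
      have ha2 : a (g j) < 0 := (hchar _).mp h2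
      rcases hle with h | ⟨heq, h⟩
      · simp only [ofLex_toLex] at h
        rw [abs_of_neg ha1, abs_of_neg ha2] at h
        have : a (g j) < a (g i) := by linarith
        by_contra hc
        push_neg at hc
        exact absurd (ha (g i) (g j) hc) (not_le.mpr this)
      · simp only [if_pos ha1, if_pos ha2, ofLex_toLex] at h
        have : ((g j).val : ℤ) ≤ ((g i).val : ℤ) := by linarith
        have hle' : (g j).val ≤ (g i).val := by exact_mod_cast this
        exact lt_of_le_of_ne hle' (fun h => hne (Fin.ext h.symm))
    · intro h1 h2
      have ha1 : ¬ a (g i) < 0 := fun h => absurd ((hchar _).mpr h) (not_lt.mpr h1)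
      have ha2 : ¬ a (g j) < 0 := fun h => absurd ((hchar _).mpr h) (not_lt.mpr h2)
      rcases hle with h | ⟨heq, h⟩
      · simp only at h
        rw [abs_of_nonneg (not_lt.mp ha1), abs_of_nonneg (not_lt.mp ha2)] at h
        by_contra hc
        push_neg at hc
        exact absurd (ha (g j) (g i) hc) (not_le.mpr h)
      · simp only [if_neg ha1, if_neg ha2, ofLex_toLex] at h
        have hle' : (g i).val ≤ (g j).val := by exact_mod_cast h
        exact lt_of_le_of_ne hle' (fun h => hne (Fin.ext h))
  · set i0 : Fin n := ⟨0, hn⟩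
    by_cases h : (g i0).val < m
    · have := (hchar _).mp h
      rw [if_pos h]
      linarith
    · rw [if_neg h]
      have := (hchar (g i0)).not.mp h
      push_neg at this
      linarith
  · intro i j hij
    have hle : key (g i) ≤ key (g j) := hmono hij
    rw [hkey, Prod.Lex.le_iff] at hle
    have habs : |a (g i)| ≤ |a (g j)| := by
      rcases hle with h | ⟨heq, _⟩
      · exact le_of_lt h
      · exact le_of_eq heq
    have e1 : (if (g i).val < m then (-1 : ℚ) else 1) * a (g i) = |a (g i)| := by
      by_cases h : (g i).val < m
      · rw [if_pos h, abs_of_neg ((hchar _).mp h)]; ring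
      · rw [if_neg h, abs_of_nonneg (not_lt.mp ((hchar _).not.mp h))]; ring
    have e2 : (if (g j).val < m then (-1 : ℚ) else 1) * a (g j) = |a (g j)| := by
      by_cases h : (g j).val < m
      · rw [if_pos h, abs_of_neg ((hchar _).mp h)]; ring
      · rw [if_neg h, abs_of_nonneg (not_lt.mp ((hchar _).not.mp h))]; ring
    rw [e1, e2]
    exact habs
end

section
/- Let r ≥ 2 and let 𝒲' = {(a'_1,…,a'_r) ∈ ℚ^r : a'_1 ≥ a'_2 ≥ ⋯ ≥ a'_{r−1} ≥ |a'_r|} be the Weyl chamber of SO(2r). There do not exist vectors v_1,…,v_r ∈ ℤ^r forming a ℤ-basis of ℤ^r such that 𝒲' = {c_1·v_1 + ⋯ + c_r·v_r : c_1,…,c_r ∈ ℚ, c_i ≥ 0}, i.e. the cone 𝒲' is not smooth with respect to the lattice ℤ^r. Consequently no single smooth cone has support 𝒲'. -/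
open Finset

private lemma stmt5_chain (r : ℕ) (hr : 2 ≤ r) (a : Fin r → ℚ)
    (h1 : ∀ i j : Fin r, i ≤ j → (j : ℕ) < r - 1 → a j ≤ a i)
    (h2 : |a ⟨r - 1, Nat.sub_lt (by omega) Nat.one_pos⟩| ≤ a ⟨r - 2, Nat.sub_lt (by omega) Nat.two_pos⟩) :
    ∀ j : Fin r, (j : ℕ) < r - 1 → 0 ≤ a j ∧ a j ≤ a ⟨0, by omega⟩ := by
  intro j hj
  have hpen : (0:ℚ) ≤ a ⟨r - 2, by omega⟩ := le_trans (abs_nonneg _) h2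
  have hle : a ⟨r - 2, by omega⟩ ≤ a j :=
    h1 j ⟨r - 2, by omega⟩ (Fin.le_def.mpr (show (j : ℕ) ≤ r - 2 by omega))
      (show r - 2 < r - 1 by omega)
  exact ⟨le_trans hpen hle,
    h1 ⟨0, by omega⟩ j (Fin.le_def.mpr (show 0 ≤ (j : ℕ) by omega)) hj⟩

private lemma stmt5_zero (r : ℕ) (hr : 2 ≤ r) (a : Fin r → ℚ)
    (h1 : ∀ i j : Fin r, i ≤ j → (j : ℕ) < r - 1 → a j ≤ a i)
    (h2 : |a ⟨r - 1, Nat.sub_lt (by omega) Nat.one_pos⟩| ≤ a ⟨r - 2, Nat.sub_lt (by omega) Nat.two_pos⟩)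
    (h0 : a ⟨0, by omega⟩ = 0) : ∀ j, a j = 0 := by
  have key : ∀ j : Fin r, (j : ℕ) < r - 1 → a j = 0 := by
    intro j hj
    obtain ⟨hnn, hub⟩ := stmt5_chain r hr a h1 h2 j hj
    linarith [h0]
  intro j
  by_cases hj : (j : ℕ) < r - 1
  · exact key j hj
  · have hj' : (j : ℕ) = r - 1 := by omega
    have hjj : j = ⟨r - 1, by omega⟩ := Fin.ext hj'
    have hpen : a ⟨r - 2, by omega⟩ = 0 := key _ (show r - 2 < r - 1 by omega)
    rw [hjj]
    have : |a ⟨r - 1, by omega⟩| ≤ 0 := by rw [← hpen]; exact h2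
    exact abs_nonpos_iff.mp this

/-- For `r ≥ 2`, the Weyl chamber
`𝒲' = {a ∈ ℚ^r : a_1 ≥ a_2 ≥ ⋯ ≥ a_{r-1} ≥ |a_r|}` of `SO(2r)` is not a smooth
cone with respect to the lattice `ℤ^r`: there is no family `v_1, …, v_r` forming
a `ℤ`-basis of `ℤ^r` such that `𝒲'` is the set of nonnegative rational linear
combinations of the `v_i`.  (Indices are `0`-based.) -/
theorem stmt5 (r : ℕ) (hr : 2 ≤ r) :
    ¬ ∃ v : Fin r → (Fin r → ℤ),
      (∃ bas : Module.Basis (Fin r) ℤ (Fin r → ℤ), ∀ i, bas i = v i) ∧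
      (∀ a : Fin r → ℚ,
        ((∀ i j : Fin r, i ≤ j → (j : ℕ) < r - 1 → a j ≤ a i) ∧
          |a ⟨r - 1, by omega⟩| ≤ a ⟨r - 2, by omega⟩) ↔
        ∃ c : Fin r → ℚ, (∀ i, 0 ≤ c i) ∧ ∀ j, a j = ∑ i, c i * ((v i j : ℤ) : ℚ)) := by
  rintro ⟨v, ⟨bas, hbas⟩, hW⟩
  -- each cast vector (fun j => (v i j : ℚ)) lies in the chamber
  have hVmem : ∀ i : Fin r,
      (∀ i' j : Fin r, i' ≤ j → (j : ℕ) < r - 1 → ((v i j : ℤ) : ℚ) ≤ ((v i i' : ℤ) : ℚ)) ∧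
        |((v i ⟨r - 1, by omega⟩ : ℤ) : ℚ)| ≤ ((v i ⟨r - 2, by omega⟩ : ℤ) : ℚ) := by
    intro i
    apply (hW (fun j => ((v i j : ℤ) : ℚ))).mpr
    refine ⟨fun t => if t = i then 1 else 0,
      fun t => by by_cases h : t = i <;> simp [h], fun j => ?_⟩
    simp [ite_mul, Finset.sum_ite_eq']
  -- the cast vectors are nonzero
  have hVne : ∀ i : Fin r, ∃ j, v i j ≠ 0 := by
    intro i
    by_contra h
    push_neg at h
    refine bas.ne_zero i ?_
    rw [hbas i]
    funext j
    exact h j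
  -- rational linear independence of the cast vectors
  have hind : ∀ c : Fin r → ℚ, (∀ j, ∑ i, c i * ((v i j : ℤ) : ℚ) = 0) → ∀ i, c i = 0 := by
    intro c hc
    set d : ℤ := ∏ i, ((c i).den : ℤ) with hd
    have hdpos : 0 < d := Finset.prod_pos (fun i _ => by exact_mod_cast (c i).den_pos)
    have hdQ : (d : ℚ) = ∏ t, ((c t).den : ℚ) := by rw [hd]; push_cast; ring
    set n : Fin r → ℤ := fun i => (c i).num * ∏ t ∈ Finset.univ.erase i, ((c t).den : ℤ) with hn
    have hcast : ∀ i, (n i : ℚ) = c i * (d : ℚ) := by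
      intro i
      calc (n i : ℚ) = ((c i).num : ℚ) * ∏ t ∈ Finset.univ.erase i, ((c t).den : ℚ) := by
            rw [hn]; push_cast; ring
        _ = (c i * ((c i).den : ℚ)) * ∏ t ∈ Finset.univ.erase i, ((c t).den : ℚ) := by
            rw [Rat.mul_den_eq_num]
        _ = c i * (d : ℚ) := by
            rw [hdQ, ← Finset.mul_prod_erase Finset.univ
              (fun t => ((c t).den : ℚ)) (Finset.mem_univ i)]
            ring
    have hZ : ∀ i, n i = 0 := by
      apply Fintype.linearIndependent_iff.mp bas.linearIndependent n
      funext j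
      have hQ : ((∑ i, n i * v i j : ℤ) : ℚ) = 0 := by
        push_cast
        calc ∑ i, (n i : ℚ) * ((v i j : ℤ) : ℚ)
            = ∑ i, (d : ℚ) * (c i * ((v i j : ℤ) : ℚ)) := by
              refine Finset.sum_congr rfl fun i _ => ?_
              rw [hcast i]; ring
          _ = (d : ℚ) * ∑ i, c i * ((v i j : ℤ) : ℚ) := by rw [Finset.mul_sum]
          _ = 0 := by rw [hc j, mul_zero]
      have hZ0 : (∑ i, n i * v i j : ℤ) = 0 := by exact_mod_cast hQ
      calc (∑ i, n i • bas i) j = ∑ i, n i * v i j := by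
            rw [Finset.sum_apply]
            exact Finset.sum_congr rfl fun i _ => by rw [hbas i]; rfl
        _ = 0 := hZ0
    intro i
    have h := hcast i
    rw [hZ i] at h
    have hd0 : (d : ℚ) ≠ 0 := by exact_mod_cast hdpos.ne'
    have := mul_eq_zero.mp h.symm
    tauto
  -- atom extraction
  have hatom : ∀ (a : Fin r → ℚ) (A : Fin r → ℤ), (∀ j, a j = ((A j : ℤ) : ℚ)) →
      ((∀ i j : Fin r, i ≤ j → (j : ℕ) < r - 1 → a j ≤ a i) ∧
        |a ⟨r - 1, by omega⟩| ≤ a ⟨r - 2, by omega⟩) →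
      a ⟨0, by omega⟩ = 1 → ∃ k, ∀ j, ((v k j : ℤ) : ℚ) = a j := by
    intro a A hA hP ha0
    have hz : 0 < r := by omega
    obtain ⟨c, hc0, hcrep⟩ := (hW a).mp hP
    set n : Fin r → ℤ := fun i => bas.repr A i with hn
    have hrep2 : ∀ j, a j = ∑ i, (n i : ℚ) * ((v i j : ℤ) : ℚ) := by
      intro j
      have h1 : ∑ i, n i • bas i = A := bas.sum_repr A
      have h2 := congrFun h1 j
      rw [Finset.sum_apply] at h2
      have h3 : ∑ i, n i * v i j = A j := by
        rw [← h2]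
        exact Finset.sum_congr rfl fun i _ => by rw [hbas i]; rfl
      rw [hA j, ← h3]
      push_cast
      ring
    have hceq : ∀ i, c i = (n i : ℚ) := by
      intro i
      have h := hind (fun i => c i - (n i : ℚ)) (fun j => by
        simp only [sub_mul, Finset.sum_sub_distrib]
        rw [← hcrep j, ← hrep2 j, sub_self]) i
      have : c i - (n i : ℚ) = 0 := h
      linarith
    have hn0 : ∀ i, 0 ≤ n i := by
      intro i
      have h := hc0 i
      rw [hceq i] at h
      exact_mod_cast h
    have hv0 : ∀ i : Fin r, 0 ≤ v i ⟨0, hz⟩ := by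
      intro i
      obtain ⟨hm1, hm2⟩ := hVmem i
      have := (stmt5_chain r hr (fun j => ((v i j : ℤ) : ℚ)) hm1 hm2 ⟨0, hz⟩
        (show 0 < r - 1 by omega)).1
      exact_mod_cast this
    have hsum1 : ∑ i, n i * v i ⟨0, hz⟩ = 1 := by
      have h : ((∑ i, n i * v i ⟨0, hz⟩ : ℤ) : ℚ) = 1 := by
        push_cast
        rw [← ha0, hrep2 ⟨0, hz⟩]
      exact_mod_cast h
    have htnn : ∀ i ∈ Finset.univ, 0 ≤ n i * v i ⟨0, hz⟩ :=
      fun i _ => mul_nonneg (hn0 i) (hv0 i)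
    have hex : ∃ k, n k * v k ⟨0, hz⟩ ≠ 0 := by
      by_contra h
      push_neg at h
      rw [Finset.sum_eq_zero (fun i _ => h i)] at hsum1
      exact one_ne_zero hsum1.symm
    obtain ⟨k, hk⟩ := hex
    have hkpos : 0 < n k * v k ⟨0, hz⟩ :=
      lt_of_le_of_ne (htnn k (Finset.mem_univ k)) (Ne.symm hk)
    have hkle : n k * v k ⟨0, hz⟩ ≤ 1 :=
      le_of_le_of_eq (Finset.single_le_sum htnn (Finset.mem_univ k)) hsum1
    have hkeq : n k * v k ⟨0, hz⟩ = 1 := le_antisymm hkle hkpos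
    have hrest : ∀ i, i ≠ k → n i * v i ⟨0, hz⟩ = 0 := by
      have hsplit := Finset.add_sum_erase Finset.univ (fun i => n i * v i ⟨0, hz⟩)
        (Finset.mem_univ k)
      rw [hsum1] at hsplit
      beta_reduce at hsplit
      have hzz : ∑ i ∈ Finset.univ.erase k, n i * v i ⟨0, hz⟩ = 0 := by omega
      intro i hi
      exact (Finset.sum_eq_zero_iff_of_nonneg
        (fun t _ => htnn t (Finset.mem_univ t))).mp hzz i (by simp [hi])
    have hnzero : ∀ i, i ≠ k → n i = 0 := by
      intro i hi
      rcases mul_eq_zero.mp (hrest i hi) with h | h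
      · exact h
      · exfalso
        obtain ⟨hm1, hm2⟩ := hVmem i
        have hzero := stmt5_zero r hr (fun j => ((v i j : ℤ) : ℚ)) hm1 hm2
          (show ((v i ⟨0, hz⟩ : ℤ) : ℚ) = 0 by exact_mod_cast h)
        obtain ⟨j, hj⟩ := hVne i
        have h5 := hzero j
        simp only [Int.cast_eq_zero] at h5
        exact hj h5
    have hnk : n k = 1 := by
      rcases Int.mul_eq_one_iff_eq_one_or_neg_one.mp hkeq with ⟨h1, _⟩ | ⟨h1, _⟩
      · exact h1
      · have := hn0 k; omega
    refine ⟨k, fun j => ?_⟩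
    rw [hrep2 j]
    rw [Finset.sum_eq_single k (fun b _ hb => by rw [hnzero b hb]; norm_num) (by simp)]
    rw [hnk]
    norm_num
  -- the three special vectors
  have hspec : ∀ e : ℤ, |e| ≤ 1 →
      ∃ k, ∀ j : Fin r, v k j = if (j : ℕ) = r - 1 then e else 1 := by
    intro e he
    obtain ⟨k, hk⟩ := hatom (fun j => if (j : ℕ) = r - 1 then (e : ℚ) else 1)
      (fun j => if (j : ℕ) = r - 1 then e else 1)
      (fun j => by by_cases h : (j : ℕ) = r - 1 <;> simp [h])
      ⟨fun i j hij hj => by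
          have hi : (i : ℕ) < r - 1 := lt_of_le_of_lt hij hj
          show (if (j : ℕ) = r - 1 then (e : ℚ) else 1) ≤
            (if (i : ℕ) = r - 1 then (e : ℚ) else 1)
          rw [if_neg (by omega), if_neg (by omega)],
        by
          show |if r - 1 = r - 1 then (e : ℚ) else 1| ≤ if r - 2 = r - 1 then (e : ℚ) else 1
          rw [if_pos rfl, if_neg (by omega)]
          exact_mod_cast he⟩
      (show (if 0 = r - 1 then (e : ℚ) else 1) = 1 by rw [if_neg (by omega)])
    refine ⟨k, fun j => ?_⟩
    have h : ((v k j : ℤ) : ℚ) = if (j : ℕ) = r - 1 then (e : ℚ) else 1 := hk j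
    by_cases hj : (j : ℕ) = r - 1
    · rw [if_pos hj] at h
      rw [if_pos hj]
      exact_mod_cast h
    · rw [if_neg hj] at h
      rw [if_neg hj]
      exact_mod_cast h
  obtain ⟨ku, hku⟩ := hspec 1 (by norm_num)
  obtain ⟨kw, hkw⟩ := hspec (-1) (by norm_num)
  obtain ⟨km, hkm⟩ := hspec 0 (by norm_num)
  have hkuL : v ku ⟨r - 1, by omega⟩ = 1 := by rw [hku]; exact if_pos rfl
  have hkwL : v kw ⟨r - 1, by omega⟩ = -1 := by rw [hkw]; exact if_pos rfl
  have hkmL : v km ⟨r - 1, by omega⟩ = 0 := by rw [hkm]; exact if_pos rfl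
  have hne_um : ku ≠ km := fun h => by rw [h, hkmL] at hkuL; exact one_ne_zero hkuL.symm
  have hne_wm : kw ≠ km := fun h => by rw [h, hkmL] at hkwL; norm_num at hkwL
  -- the relation  v ku + v kw = 2 • v km
  have hrel : bas ku + bas kw = (2 : ℤ) • bas km := by
    funext j
    simp only [Pi.add_apply, Pi.smul_apply, smul_eq_mul, hbas]
    rw [hku j, hkw j, hkm j]
    by_cases hj : (j : ℕ) = r - 1 <;> simp [hj]
  have hrepr := congrArg (fun x => bas.repr x km) hrel
  simp only [map_add, map_smul, Module.Basis.repr_self, Finsupp.add_apply, Finsupp.smul_apply,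
    Finsupp.single_apply, if_neg hne_um, if_neg hne_wm, smul_eq_mul, mul_one,
    if_pos rfl] at hrepr
  norm_num at hrepr
end

section
/- Let F be an n-dimensional subspace of V = V₁ × V₂. Then dim(F^⊥ ∩ V₁) = dim(F ∩ V₂) and dim(F^⊥ ∩ V₂) = dim(F ∩ V₁). -/
open Module Submodule LinearMap

private lemma perp_finrank (k : Type*) [Field k] {M : Type*} [AddCommGroup M] [Module k M]
    [FiniteDimensional k M] (B₁ : M →ₗ[k] M →ₗ[k] k) (hinj : Function.Injective B₁)
    (W : Submodule k M) :
    finrank k (Submodule.comap B₁ W.dualAnnihilator) + finrank k W = finrank k M := by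
  have hdim : finrank k M = finrank k (Module.Dual k M) := (Subspace.dual_finrank_eq).symm
  let e := LinearMap.linearEquivOfInjective B₁ hinj hdim
  have hc : Submodule.comap B₁ W.dualAnnihilator
      = Submodule.comap (e : M →ₗ[k] Module.Dual k M) W.dualAnnihilator := rfl
  rw [hc, Submodule.comap_equiv_eq_map_symm, LinearEquiv.finrank_map_eq]
  have h1 := Submodule.finrank_quotient_add_finrank W
  have h2 : finrank k (M ⧸ W) = finrank k ↥W.dualAnnihilator :=
    (Subspace.quotEquivAnnihilator W).finrank_eq
  convert h1 using 2
  exact h2.symm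

private lemma rn_fst (k : Type*) [Field k] {M N : Type*} [AddCommGroup M] [Module k M]
    [AddCommGroup N] [Module k N] [FiniteDimensional k M] [FiniteDimensional k N]
    (F : Submodule k (M × N)) :
    finrank k (F.map (LinearMap.fst k M N)) +
      finrank k ↥(F ⊓ (⊥ : Submodule k M).prod (⊤ : Submodule k N)) = finrank k F := by
  let f := (LinearMap.fst k M N).comp F.subtype
  have h1 : LinearMap.range f = F.map (LinearMap.fst k M N) := by
    rw [LinearMap.range_comp, Submodule.range_subtype]
  have h2 : LinearMap.ker f
      = Submodule.comap F.subtype ((⊥ : Submodule k M).prod (⊤ : Submodule k N)) := by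
    rw [LinearMap.ker_comp]
    congr 1
    ext v
    simp [Submodule.mem_prod]
  have h3 : finrank k ↥(F ⊓ (⊥ : Submodule k M).prod (⊤ : Submodule k N))
      = finrank k (LinearMap.ker f) := by
    rw [h2, ← Submodule.finrank_map_subtype_eq F, Submodule.map_comap_subtype]
  have h4 := LinearMap.finrank_range_add_finrank_ker f
  rw [h1] at h4
  omega

private lemma rn_snd (k : Type*) [Field k] {M N : Type*} [AddCommGroup M] [Module k M]
    [AddCommGroup N] [Module k N] [FiniteDimensional k M] [FiniteDimensional k N]
    (F : Submodule k (M × N)) :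
    finrank k (F.map (LinearMap.snd k M N)) +
      finrank k ↥(F ⊓ (⊤ : Submodule k M).prod (⊥ : Submodule k N)) = finrank k F := by
  let f := (LinearMap.snd k M N).comp F.subtype
  have h1 : LinearMap.range f = F.map (LinearMap.snd k M N) := by
    rw [LinearMap.range_comp, Submodule.range_subtype]
  have h2 : LinearMap.ker f
      = Submodule.comap F.subtype ((⊤ : Submodule k M).prod (⊥ : Submodule k N)) := by
    rw [LinearMap.ker_comp]
    congr 1
    ext v
    simp [Submodule.mem_prod]
  have h3 : finrank k ↥(F ⊓ (⊤ : Submodule k M).prod (⊥ : Submodule k N))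
      = finrank k (LinearMap.ker f) := by
    rw [h2, ← Submodule.finrank_map_subtype_eq F, Submodule.map_comap_subtype]
  have h4 := LinearMap.finrank_range_add_finrank_ker f
  rw [h1] at h4
  omega

/-- Let `V₁`, `V₂` be `n`-dimensional vector spaces over a field `k`,
equipped with nondegenerate bilinear forms `B₁`, `B₂` that are both symmetric or both
alternating, and endow `V = V₁ × V₂` with the form `B((u₁,u₂),(v₁,v₂)) = B₁(u₁,v₁) +
B₂(u₂,v₂)`.  For every `n`-dimensional subspace `F` of `V`, one has
`dim(F^⊥ ∩ V₁) = dim(F ∩ V₂)` and `dim(F^⊥ ∩ V₂) = dim(F ∩ V₁)`, where `V₁`, `V₂` are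
identified with `V₁ × {0}` and `{0} × V₂` and `F^⊥ = {v : B(v,f) = 0 ∀ f ∈ F}`. -/
theorem stmt6 (k : Type*) [Field k] (n : ℕ) (hn : 1 ≤ n)
    (V₁ V₂ : Type*) [AddCommGroup V₁] [Module k V₁] [AddCommGroup V₂] [Module k V₂]
    [FiniteDimensional k V₁] [FiniteDimensional k V₂]
    (hd₁ : Module.finrank k V₁ = n) (hd₂ : Module.finrank k V₂ = n)
    (B₁ : V₁ →ₗ[k] V₁ →ₗ[k] k) (B₂ : V₂ →ₗ[k] V₂ →ₗ[k] k)
    (hB₁ : ∀ v, (∀ w, B₁ v w = 0) → v = 0)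
    (hB₂ : ∀ v, (∀ w, B₂ v w = 0) → v = 0)
    (hsym : ((∀ x y, B₁ x y = B₁ y x) ∧ (∀ x y, B₂ x y = B₂ y x)) ∨
            ((∀ x, B₁ x x = 0) ∧ (∀ x, B₂ x x = 0)))
    (B : (V₁ × V₂) →ₗ[k] (V₁ × V₂) →ₗ[k] k)
    (hB : ∀ u v, B u v = B₁ u.1 v.1 + B₂ u.2 v.2)
    (F : Submodule k (V₁ × V₂)) (hF : Module.finrank k F = n)
    (Fperp : Submodule k (V₁ × V₂))
    (hFperp : ∀ v, v ∈ Fperp ↔ ∀ f ∈ F, B v f = 0) :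
    Module.finrank k ↥(Fperp ⊓ (⊤ : Submodule k V₁).prod (⊥ : Submodule k V₂)) =
      Module.finrank k ↥(F ⊓ (⊥ : Submodule k V₁).prod (⊤ : Submodule k V₂)) ∧
    Module.finrank k ↥(Fperp ⊓ (⊥ : Submodule k V₁).prod (⊤ : Submodule k V₂)) =
      Module.finrank k ↥(F ⊓ (⊤ : Submodule k V₁).prod (⊥ : Submodule k V₂)) := by
  have hinj₁ : Function.Injective B₁ := by
    intro x y h
    have h0 : x - y = 0 := hB₁ _ (fun w => by rw [map_sub, LinearMap.sub_apply, h, sub_self])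
    exact sub_eq_zero.mp h0
  have hinj₂ : Function.Injective B₂ := by
    intro x y h
    have h0 : x - y = 0 := hB₂ _ (fun w => by rw [map_sub, LinearMap.sub_apply, h, sub_self])
    exact sub_eq_zero.mp h0
  set W₁ := F.map (LinearMap.fst k V₁ V₂) with hW₁
  set W₂ := F.map (LinearMap.snd k V₁ V₂) with hW₂
  have key₁ : Fperp ⊓ (⊤ : Submodule k V₁).prod (⊥ : Submodule k V₂)
      = (Submodule.comap B₁ W₁.dualAnnihilator).map (LinearMap.inl k V₁ V₂) := by
    ext v
    simp only [Submodule.mem_inf, Submodule.mem_prod, Submodule.mem_top, true_and,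
      Submodule.mem_bot, Submodule.mem_map]
    constructor
    · rintro ⟨hv, h2⟩
      refine ⟨v.1, ?_, ?_⟩
      · rw [Submodule.mem_comap, Submodule.mem_dualAnnihilator]
        rintro w ⟨f, hf, rfl⟩
        have hbl := (hFperp v).1 hv f hf
        rw [hB, h2] at hbl
        simpa using hbl
      · rw [LinearMap.inl_apply]
        exact Prod.ext rfl h2.symm
    · rintro ⟨x, hx, rfl⟩
      rw [Submodule.mem_comap, Submodule.mem_dualAnnihilator] at hx
      refine ⟨(hFperp _).2 fun f hf => ?_, by simp⟩
      rw [hB]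
      have hb := hx f.1 ⟨f, hf, rfl⟩
      simpa using hb
  have key₂ : Fperp ⊓ (⊥ : Submodule k V₁).prod (⊤ : Submodule k V₂)
      = (Submodule.comap B₂ W₂.dualAnnihilator).map (LinearMap.inr k V₁ V₂) := by
    ext v
    simp only [Submodule.mem_inf, Submodule.mem_prod, Submodule.mem_top, and_true,
      Submodule.mem_bot, Submodule.mem_map]
    constructor
    · rintro ⟨hv, h2⟩
      refine ⟨v.2, ?_, ?_⟩
      · rw [Submodule.mem_comap, Submodule.mem_dualAnnihilator]
        rintro w ⟨f, hf, rfl⟩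
        have hbl := (hFperp v).1 hv f hf
        rw [hB, h2] at hbl
        simpa using hbl
      · rw [LinearMap.inr_apply]
        exact Prod.ext h2.symm rfl
    · rintro ⟨x, hx, rfl⟩
      rw [Submodule.mem_comap, Submodule.mem_dualAnnihilator] at hx
      refine ⟨(hFperp _).2 fun f hf => ?_, by simp⟩
      rw [hB]
      have hb := hx f.2 ⟨f, hf, rfl⟩
      simpa using hb
  have ei₁ : finrank k ↥(Submodule.comap B₁ W₁.dualAnnihilator)
      = finrank k ↥((Submodule.comap B₁ W₁.dualAnnihilator).map (LinearMap.inl k V₁ V₂)) :=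
    (Submodule.equivMapOfInjective (LinearMap.inl k V₁ V₂) LinearMap.inl_injective
      (Submodule.comap B₁ W₁.dualAnnihilator)).finrank_eq
  have ei₂ : finrank k ↥(Submodule.comap B₂ W₂.dualAnnihilator)
      = finrank k ↥((Submodule.comap B₂ W₂.dualAnnihilator).map (LinearMap.inr k V₁ V₂)) :=
    (Submodule.equivMapOfInjective (LinearMap.inr k V₁ V₂) LinearMap.inr_injective
      (Submodule.comap B₂ W₂.dualAnnihilator)).finrank_eq
  have hp₁ := perp_finrank k B₁ hinj₁ W₁
  have hp₂ := perp_finrank k B₂ hinj₂ W₂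
  have hr₁ := rn_fst k F
  have hr₂ := rn_snd k F
  rw [← hW₁] at hr₁
  rw [← hW₂] at hr₂
  rw [key₁, key₂, ← ei₁, ← ei₂]
  omega
end

section
/- Let F be an n-dimensional subspace of V = V₁ × V₂ and let d be an integer with 0 ≤ d ≤ n. Then dim(F^⊥ ∩ V₁) + dim(F^⊥ ∩ V₂) = dim(F ∩ V₁) + dim(F ∩ V₂); in particular dim(F ∩ V₁) + dim(F ∩ V₂) ≥ n − d if and only if dim(F^⊥ ∩ V₁) + dim(F^⊥ ∩ V₂) ≥ n − d. (This says that the involution F ↦ F^⊥ of the Grassmannian of n-dimensional subspaces of V leaves each degeneracy locus 𝒵_d invariant.) -/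
open Module LinearMap

lemma keyFst {k V₁ V₂ : Type*} [Field k] [AddCommGroup V₁] [Module k V₁]
    [AddCommGroup V₂] [Module k V₂] [FiniteDimensional k V₁] [FiniteDimensional k V₂]
    {n : ℕ} (hd₁ : Module.finrank k V₁ = n)
    (B₁ : V₁ →ₗ[k] V₁ →ₗ[k] k) (hnd : LinearMap.BilinForm.Nondegenerate B₁) (hrefl : B₁.IsRefl)
    (F Fperp : Submodule k (V₁ × V₂)) (hF : Module.finrank k F = n)
    (hmem : ∀ v₁ : V₁, ((v₁, (0 : V₂)) ∈ Fperp ↔ ∀ f ∈ F, B₁ v₁ f.1 = 0)) :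
    Module.finrank k ↥(Fperp ⊓ (⊤ : Submodule k V₁).prod (⊥ : Submodule k V₂)) =
      Module.finrank k ↥(F ⊓ (⊥ : Submodule k V₁).prod (⊤ : Submodule k V₂)) := by
  set P : Submodule k V₁ := F.map (LinearMap.fst k V₁ V₂) with hP
  have hstep1 : Fperp ⊓ (⊤ : Submodule k V₁).prod (⊥ : Submodule k V₂) =
      (LinearMap.BilinForm.orthogonal B₁ P).map (LinearMap.inl k V₁ V₂) := by
    ext ⟨v₁, v₂⟩
    simp only [Submodule.mem_inf, Submodule.mem_prod, Submodule.mem_top, Submodule.mem_bot,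
      true_and, Submodule.mem_map, LinearMap.coe_inl]
    constructor
    · rintro ⟨hv, rfl⟩
      refine ⟨v₁, ?_, rfl⟩
      rw [LinearMap.BilinForm.mem_orthogonal_iff]
      rintro w ⟨f, hf, rfl⟩
      exact hrefl _ _ ((hmem v₁).1 hv f hf)
    · rintro ⟨x, hx, h⟩
      obtain ⟨rfl, rfl⟩ := Prod.mk.injEq .. ▸ h
      refine ⟨(hmem x).2 fun f hf => ?_, rfl⟩
      exact hrefl _ _ (hx f.1 ⟨f, hf, rfl⟩)
  have hstep2 : Module.finrank k ↥((LinearMap.BilinForm.orthogonal B₁ P).map (LinearMap.inl k V₁ V₂)) =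
      Module.finrank k ↥(LinearMap.BilinForm.orthogonal B₁ P) :=
    (Submodule.equivMapOfInjective _ LinearMap.inl_injective _).symm.finrank_eq
  have hstep3 : Module.finrank k ↥(LinearMap.BilinForm.orthogonal B₁ P) = n - Module.finrank k P := by
    rw [LinearMap.BilinForm.finrank_orthogonal (B:=B₁) hnd, hd₁]
  -- step 4
  have hstep4 : Module.finrank k P + Module.finrank k ↥(F ⊓ (⊥ : Submodule k V₁).prod (⊤ : Submodule k V₂)) = n := by
    have hrange : LinearMap.range ((LinearMap.fst k V₁ V₂).comp F.subtype) = P := by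
      ext x
      simp [hP]
    have hker : LinearMap.ker ((LinearMap.fst k V₁ V₂).comp F.subtype) =
        Submodule.comap F.subtype ((⊥ : Submodule k V₁).prod (⊤ : Submodule k V₂)) := by
      ext x
      simp [Prod.ext_iff]
    have := LinearMap.finrank_range_add_finrank_ker ((LinearMap.fst k V₁ V₂).comp F.subtype)
    rw [hrange, hker, hF] at this
    rw [← this]
    congr 1
    rw [← Submodule.finrank_map_subtype_eq F, Submodule.map_comap_subtype, inf_comm]
  have hPle : Module.finrank k P ≤ n := le_of_add_le_left hstep4.le
  rw [hstep1, hstep2, hstep3]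
  omega

lemma keySnd {k V₁ V₂ : Type*} [Field k] [AddCommGroup V₁] [Module k V₁]
    [AddCommGroup V₂] [Module k V₂] [FiniteDimensional k V₁] [FiniteDimensional k V₂]
    {n : ℕ} (hd₂ : Module.finrank k V₂ = n)
    (B₂ : V₂ →ₗ[k] V₂ →ₗ[k] k) (hnd : LinearMap.BilinForm.Nondegenerate B₂) (hrefl : B₂.IsRefl)
    (F Fperp : Submodule k (V₁ × V₂)) (hF : Module.finrank k F = n)
    (hmem : ∀ v₂ : V₂, (((0 : V₁), v₂) ∈ Fperp ↔ ∀ f ∈ F, B₂ v₂ f.2 = 0)) :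
    Module.finrank k ↥(Fperp ⊓ (⊥ : Submodule k V₁).prod (⊤ : Submodule k V₂)) =
      Module.finrank k ↥(F ⊓ (⊤ : Submodule k V₁).prod (⊥ : Submodule k V₂)) := by
  set P : Submodule k V₂ := F.map (LinearMap.snd k V₁ V₂) with hP
  have hstep1 : Fperp ⊓ (⊥ : Submodule k V₁).prod (⊤ : Submodule k V₂) =
      (LinearMap.BilinForm.orthogonal B₂ P).map (LinearMap.inr k V₁ V₂) := by
    ext ⟨v₁, v₂⟩
    simp only [Submodule.mem_inf, Submodule.mem_prod, Submodule.mem_top, Submodule.mem_bot,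
      and_true, Submodule.mem_map, LinearMap.coe_inr]
    constructor
    · rintro ⟨hv, rfl⟩
      refine ⟨v₂, ?_, rfl⟩
      rw [LinearMap.BilinForm.mem_orthogonal_iff]
      rintro w ⟨f, hf, rfl⟩
      exact hrefl _ _ ((hmem v₂).1 hv f hf)
    · rintro ⟨x, hx, h⟩
      obtain ⟨rfl, rfl⟩ := Prod.mk.injEq .. ▸ h
      refine ⟨(hmem x).2 fun f hf => ?_, rfl⟩
      exact hrefl _ _ (hx f.2 ⟨f, hf, rfl⟩)
  have hstep2 : Module.finrank k ↥((LinearMap.BilinForm.orthogonal B₂ P).map (LinearMap.inr k V₁ V₂)) =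
      Module.finrank k ↥(LinearMap.BilinForm.orthogonal B₂ P) :=
    (Submodule.equivMapOfInjective _ LinearMap.inr_injective _).symm.finrank_eq
  have hstep3 : Module.finrank k ↥(LinearMap.BilinForm.orthogonal B₂ P) = n - Module.finrank k P := by
    rw [LinearMap.BilinForm.finrank_orthogonal (B:=B₂) hnd, hd₂]
  have hstep4 : Module.finrank k P + Module.finrank k ↥(F ⊓ (⊤ : Submodule k V₁).prod (⊥ : Submodule k V₂)) = n := by
    have hrange : LinearMap.range ((LinearMap.snd k V₁ V₂).comp F.subtype) = P := by
      ext x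
      simp [hP]
    have hker : LinearMap.ker ((LinearMap.snd k V₁ V₂).comp F.subtype) =
        Submodule.comap F.subtype ((⊤ : Submodule k V₁).prod (⊥ : Submodule k V₂)) := by
      ext x
      simp [Prod.ext_iff]
    have := LinearMap.finrank_range_add_finrank_ker ((LinearMap.snd k V₁ V₂).comp F.subtype)
    rw [hrange, hker, hF] at this
    rw [← this]
    congr 1
    rw [← Submodule.finrank_map_subtype_eq F, Submodule.map_comap_subtype, inf_comm]
  have hPle : Module.finrank k P ≤ n := le_of_add_le_left hstep4.le
  rw [hstep1, hstep2, hstep3]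
  omega


/-- In the setting of a direct sum `V = V₁ × V₂` of `n`-dimensional
spaces with nondegenerate bilinear forms, both symmetric or both alternating, for
every `n`-dimensional subspace `F` of `V` and every `0 ≤ d ≤ n` one has
`dim(F^⊥ ∩ V₁) + dim(F^⊥ ∩ V₂) = dim(F ∩ V₁) + dim(F ∩ V₂)`; in particular
`dim(F ∩ V₁) + dim(F ∩ V₂) ≥ n - d` iff `dim(F^⊥ ∩ V₁) + dim(F^⊥ ∩ V₂) ≥ n - d`,
so the involution `F ↦ F^⊥` of the Grassmannian preserves each locus `𝒵_d`. -/
theorem stmt7 (k : Type*) [Field k] (n d : ℕ) (hn : 1 ≤ n) (hd : d ≤ n)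
    (V₁ V₂ : Type*) [AddCommGroup V₁] [Module k V₁] [AddCommGroup V₂] [Module k V₂]
    [FiniteDimensional k V₁] [FiniteDimensional k V₂]
    (hd₁ : Module.finrank k V₁ = n) (hd₂ : Module.finrank k V₂ = n)
    (B₁ : V₁ →ₗ[k] V₁ →ₗ[k] k) (B₂ : V₂ →ₗ[k] V₂ →ₗ[k] k)
    (hB₁ : ∀ v, (∀ w, B₁ v w = 0) → v = 0)
    (hB₂ : ∀ v, (∀ w, B₂ v w = 0) → v = 0)
    (hsym : ((∀ x y, B₁ x y = B₁ y x) ∧ (∀ x y, B₂ x y = B₂ y x)) ∨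
            ((∀ x, B₁ x x = 0) ∧ (∀ x, B₂ x x = 0)))
    (B : (V₁ × V₂) →ₗ[k] (V₁ × V₂) →ₗ[k] k)
    (hB : ∀ u v, B u v = B₁ u.1 v.1 + B₂ u.2 v.2)
    (F : Submodule k (V₁ × V₂)) (hF : Module.finrank k F = n)
    (Fperp : Submodule k (V₁ × V₂))
    (hFperp : ∀ v, v ∈ Fperp ↔ ∀ f ∈ F, B v f = 0) :
    (Module.finrank k ↥(Fperp ⊓ (⊤ : Submodule k V₁).prod (⊥ : Submodule k V₂)) +
       Module.finrank k ↥(Fperp ⊓ (⊥ : Submodule k V₁).prod (⊤ : Submodule k V₂)) =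
     Module.finrank k ↥(F ⊓ (⊤ : Submodule k V₁).prod (⊥ : Submodule k V₂)) +
       Module.finrank k ↥(F ⊓ (⊥ : Submodule k V₁).prod (⊤ : Submodule k V₂))) ∧
    (n - d ≤ Module.finrank k ↥(F ⊓ (⊤ : Submodule k V₁).prod (⊥ : Submodule k V₂)) +
       Module.finrank k ↥(F ⊓ (⊥ : Submodule k V₁).prod (⊤ : Submodule k V₂)) ↔
     n - d ≤ Module.finrank k ↥(Fperp ⊓ (⊤ : Submodule k V₁).prod (⊥ : Submodule k V₂)) +
       Module.finrank k ↥(Fperp ⊓ (⊥ : Submodule k V₁).prod (⊤ : Submodule k V₂))) := by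
  have hrefl₁ : B₁.IsRefl := by
    rcases hsym with ⟨h1, _⟩ | ⟨h1, _⟩
    · exact fun x y h => (h1 y x).trans h
    · exact LinearMap.IsAlt.isRefl h1
  have hrefl₂ : B₂.IsRefl := by
    rcases hsym with ⟨_, h2⟩ | ⟨_, h2⟩
    · exact fun x y h => (h2 y x).trans h
    · exact LinearMap.IsAlt.isRefl h2
  have hmem₁ : ∀ v₁ : V₁, ((v₁, (0 : V₂)) ∈ Fperp ↔ ∀ f ∈ F, B₁ v₁ f.1 = 0) := by
    intro v₁
    rw [hFperp]
    refine forall₂_congr fun f hf => ?_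
    rw [hB]; simp
  have hmem₂ : ∀ v₂ : V₂, (((0 : V₁), v₂) ∈ Fperp ↔ ∀ f ∈ F, B₂ v₂ f.2 = 0) := by
    intro v₂
    rw [hFperp]
    refine forall₂_congr fun f hf => ?_
    rw [hB]; simp
  have e₁ := keyFst hd₁ B₁ (hrefl₁.nondegenerate_iff_separatingLeft.2 hB₁) hrefl₁ F Fperp hF hmem₁
  have e₂ := keySnd hd₂ B₂ (hrefl₂.nondegenerate_iff_separatingLeft.2 hB₂) hrefl₂ F Fperp hF hmem₂
  omega
end

section
/- Let k be a field, r a positive integer with r·1 ≠ 0 in k, V a k-vector space, and σ a k-linear automorphism of V with σ^r = id. Let l_1,…,l_s be linearly independent elements of the dual space V* and suppose there is a permutation π of {1,…,s} such that l_i ∘ σ = l_{π(i)} for each i. If i_1,…,i_t ∈ {1,…,s} lie in pairwise distinct orbits of π, then the restrictions of l_{i_1},…,l_{i_t} to the fixed subspace V^σ = {v ∈ V : σ(v) = v} are linearly independent elements of (V^σ)*. -/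
/-- Let `k` be a field, `r > 0` with `r·1 ≠ 0` in `k`, `V` a
`k`-vector space and `σ` a `k`-linear automorphism with `σ^r = id`.  Let
`l₁, …, l_s ∈ V*` be linearly independent and `π` a permutation of `{1,…,s}` with
`l_i ∘ σ = l_{π(i)}` for all `i`.  If the indices `i₁, …, i_t` lie in pairwise
distinct orbits (cycles) of `π`, then the restrictions of `l_{i₁}, …, l_{i_t}` to the
fixed subspace `V^σ = ker(σ - id)` are linearly independent. -/
theorem stmt13 (k : Type*) [Field k] (r : ℕ) (hr : 0 < r) (hrk : (r : k) ≠ 0)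
    (V : Type*) [AddCommGroup V] [Module k V]
    (σ : V →ₗ[k] V) (hσ : σ ^ r = 1)
    (s t : ℕ) (l : Fin s → Module.Dual k V) (hl : LinearIndependent k l)
    (π : Equiv.Perm (Fin s)) (hπ : ∀ i, (l i).comp σ = l (π i))
    (idx : Fin t → Fin s)
    (hidx : ∀ a b : Fin t, a ≠ b → ¬ π.SameCycle (idx a) (idx b)) :
    LinearIndependent k
      (fun a : Fin t => (l (idx a)).comp (LinearMap.ker (σ - 1)).subtype) := by
  -- l i ∘ σ^n = l (π^n i)
  have hcomp : ∀ (n : ℕ) (i : Fin s), (l i).comp (σ ^ n) = l ((π ^ n) i) := by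
    intro n
    induction n with
    | zero =>
      intro i
      rw [pow_zero, pow_zero, Module.End.one_eq_id, LinearMap.comp_id, Equiv.Perm.one_apply]
    | succ n ih =>
      intro i
      have h1 : σ ^ (n + 1) = (σ ^ n).comp σ := by rw [pow_succ]; rfl
      rw [h1, ← LinearMap.comp_assoc, ih, hπ, pow_succ']
      rfl
  -- π ^ r = 1 pointwise
  have hπr : ∀ i : Fin s, (π ^ r) i = i := by
    intro i
    have h1 := hcomp r i
    rw [hσ, Module.End.one_eq_id, LinearMap.comp_id] at h1
    exact (hl.injective h1).symm
  -- averaging operator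
  set P : V →ₗ[k] V := ∑ n ∈ Finset.range r, σ ^ n with hP
  have hker : ∀ v : V, P v ∈ LinearMap.ker (σ - 1) := by
    intro v
    have h0 : (σ - 1) * P = 0 := by
      rw [hP, mul_geom_sum, hσ, sub_self]
    rw [LinearMap.mem_ker]
    have := congrArg (fun f : V →ₗ[k] V => f v) h0
    simpa using this
  rw [Fintype.linearIndependent_iff]
  intro g hg a
  -- the functional identity on V
  have hfun : ∑ b : Fin t, ∑ n ∈ Finset.range r, g b • l ((π ^ n) (idx b)) = 0 := by
    ext v
    have h1 := congrArg (fun f => f ⟨P v, hker v⟩) hg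
    simp only [LinearMap.zero_apply, LinearMap.sum_apply, LinearMap.smul_apply,
      LinearMap.comp_apply, Submodule.subtype_apply] at h1 ⊢
    have h3 : ∀ b n, (l ((π ^ n) (idx b))) v = l (idx b) ((σ ^ n) v) := by
      intro b n
      rw [← hcomp n (idx b)]; rfl
    simp_rw [h3, ← Finset.smul_sum]
    have h4 : ∀ b : Fin t, ∑ n ∈ Finset.range r, (l (idx b)) ((σ ^ n) v)
        = l (idx b) (P v) := by
      intro b
      rw [hP]
      simp [LinearMap.sum_apply]
    simp_rw [h4]
    exact h1
  classical
  -- regroup by fibers of (b, n) ↦ π^n (idx b)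
  have hprod : ∑ p ∈ (Finset.univ : Finset (Fin t)) ×ˢ Finset.range r,
      g p.1 • l ((π ^ p.2) (idx p.1)) = 0 := by
    rw [Finset.sum_product]
    exact hfun
  set c : Fin s → k := fun j =>
    ∑ p ∈ ((Finset.univ : Finset (Fin t)) ×ˢ Finset.range r).filter
      (fun p => (π ^ p.2) (idx p.1) = j), g p.1 with hc
  have hfib : ∑ j : Fin s, c j • l j = 0 := by
    rw [← hprod, ← Finset.sum_fiberwise ((Finset.univ : Finset (Fin t)) ×ˢ Finset.range r)
      (fun p => (π ^ p.2) (idx p.1)) (fun p => g p.1 • l ((π ^ p.2) (idx p.1)))]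
    refine Finset.sum_congr rfl fun j _ => ?_
    rw [hc, Finset.sum_smul]
    refine Finset.sum_congr rfl fun p hp => ?_
    rw [(Finset.mem_filter.mp hp).2]
  have hcz : ∀ j, c j = 0 := Fintype.linearIndependent_iff.mp hl c hfib
  have hca := hcz (idx a)
  -- identify the fiber over idx a
  set A : Finset ℕ := (Finset.range r).filter (fun n => (π ^ n) (idx a) = idx a) with hA
  have hfilter : ((Finset.univ : Finset (Fin t)) ×ˢ Finset.range r).filter
      (fun p => (π ^ p.2) (idx p.1) = idx a) = ({a} : Finset (Fin t)) ×ˢ A := by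
    ext p
    simp only [Finset.mem_filter, Finset.mem_product, Finset.mem_univ, true_and,
      Finset.mem_singleton, hA]
    constructor
    · rintro ⟨hn, heq⟩
      have hpa : p.1 = a := by
        by_contra hne
        exact hidx p.1 a hne ⟨(p.2 : ℤ), by rw [zpow_natCast]; exact heq⟩
      refine ⟨hpa, hn, ?_⟩
      rw [hpa] at heq
      exact heq
    · rintro ⟨hpa, hn, heq⟩
      exact ⟨hn, by rw [hpa]; exact heq⟩
  have hsum : c (idx a) = (A.card : k) * g a := by
    show (∑ p ∈ ((Finset.univ : Finset (Fin t)) ×ˢ Finset.range r).filter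
      (fun p => (π ^ p.2) (idx p.1) = idx a), g p.1) = (A.card : k) * g a
    rw [hfilter, Finset.sum_product, Finset.sum_singleton]
    simp [Finset.sum_const, nsmul_eq_mul]
  -- compute |A| = r / d where d is the minimal period
  set d : ℕ := Function.minimalPeriod (⇑π) (idx a) with hd
  have hper : Function.IsPeriodicPt (⇑π) r (idx a) := by
    show (⇑π)^[r] (idx a) = idx a
    rw [Equiv.Perm.iterate_eq_pow]
    exact hπr (idx a)
  have hdr : d ∣ r := hper.minimalPeriod_dvd
  have hdpos : 0 < d := hper.minimalPeriod_pos hr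
  have hAcard : A.card = r / d := by
    have himg : A = Finset.image (fun q => d * q) (Finset.range (r / d)) := by
      ext n
      simp only [hA, Finset.mem_filter, Finset.mem_range, Finset.mem_image]
      constructor
      · rintro ⟨hn, heq⟩
        have hdn : d ∣ n := by
          apply Function.IsPeriodicPt.minimalPeriod_dvd
          show (⇑π)^[n] (idx a) = idx a
          rw [Equiv.Perm.iterate_eq_pow]
          exact heq
        obtain ⟨q, rfl⟩ := hdn
        exact ⟨q, (Nat.lt_div_iff_mul_lt' hdr q).mpr hn, rfl⟩
      · rintro ⟨q, hq, rfl⟩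
        refine ⟨(Nat.lt_div_iff_mul_lt' hdr q).mp hq, ?_⟩
        have : Function.IsPeriodicPt (⇑π) (d * q) (idx a) :=
          (Function.isPeriodicPt_minimalPeriod (⇑π) (idx a)).mul_const q
        rw [Function.IsPeriodicPt, Function.IsFixedPt, Equiv.Perm.iterate_eq_pow] at this
        exact this
    rw [himg, Finset.card_image_of_injective _ (fun x y h => by
      exact Nat.eq_of_mul_eq_mul_left hdpos h), Finset.card_range]
  have hcard_ne : ((A.card : k)) ≠ 0 := by
    rw [hAcard]
    obtain ⟨e, he⟩ := Nat.div_dvd_of_dvd hdr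
    intro h0
    apply hrk
    rw [he, Nat.cast_mul, h0, zero_mul]
  rw [hsum] at hca
  exact (mul_eq_zero.mp hca).resolve_left hcard_ne
end

section
/- Let R be a commutative ring, let M be an m × p matrix over R, and let r ≥ 0 and k ≥ 1 be integers. Let N be the (m+r) × (p+r) block-diagonal matrix with blocks M and the r × r identity matrix, i.e. N = [[M, 0],[0, I_r]]. Then the ideal of R generated by all (k+r) × (k+r) minors of N equals the ideal of R generated by all k × k minors of M. -/
/-- The ideal of a commutative ring `R` generated by the `k × k` minors of a matrix,
i.e. by the determinants of the square submatrices obtained by choosing `k` rows and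
`k` columns via strictly increasing index maps. -/
def minorsIdeal {R : Type*} [CommRing R] {I J : Type*} [LinearOrder I] [LinearOrder J]
    (M : Matrix I J R) (k : ℕ) : Ideal R :=
  Ideal.span {x : R | ∃ (rs : Fin k → I) (cs : Fin k → J),
    StrictMono rs ∧ StrictMono cs ∧ x = (M.submatrix rs cs).det}

section Aux

open Matrix Finset

variable {R : Type*} [CommRing R]

lemma one_mem_minorsIdeal_zero {I J : Type*} [LinearOrder I] [LinearOrder J]
    (M : Matrix I J R) : (1 : R) ∈ minorsIdeal M 0 := by
  refine Ideal.subset_span ⟨Fin.elim0, Fin.elim0, fun a => a.elim0, fun a => a.elim0, ?_⟩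
  simp [Matrix.det_fin_zero]

/-- The determinant of any `n × n` submatrix (with arbitrary, not necessarily monotone
or injective, index maps) lies in the ideal of `k` minors whenever `k ≤ n`. -/
lemma mem_minorsIdeal_of_maps {I J : Type*} [LinearOrder I] [LinearOrder J]
    (M : Matrix I J R) (k : ℕ) :
    ∀ (n : ℕ), k ≤ n → ∀ (f : Fin n → I) (g : Fin n → J),
      (M.submatrix f g).det ∈ minorsIdeal M k := by
  intro n
  induction n with
  | zero =>
    intro hn f g
    interval_cases k
    simpa [Matrix.det_fin_zero] using one_mem_minorsIdeal_zero M
  | succ n ih =>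
    intro hn f g
    rcases Nat.lt_or_ge k (n + 1) with h | h
    · -- expand along the first row
      rw [Matrix.det_succ_row_zero]
      refine Ideal.sum_mem _ fun j _ => ?_
      rw [Matrix.submatrix_submatrix]
      exact Ideal.mul_mem_left _ _ (ih (Nat.lt_succ_iff.mp h) _ _)
    · have hk : k = n + 1 := le_antisymm hn h
      subst hk
      by_cases hf : Function.Injective f
      · by_cases hg : Function.Injective g
        · -- sort the rows and columns
          set σ := Tuple.sort f with hσ
          set τ := Tuple.sort g with hτ
          have hfs : StrictMono (f ∘ σ) :=
            (Tuple.monotone_sort f).strictMono_of_injective (hf.comp σ.injective)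
          have hgs : StrictMono (g ∘ τ) :=
            (Tuple.monotone_sort g).strictMono_of_injective (hg.comp τ.injective)
          have key : (M.submatrix (f ∘ σ) (g ∘ τ)).det ∈ minorsIdeal M (n + 1) :=
            Ideal.subset_span ⟨f ∘ σ, g ∘ τ, hfs, hgs, rfl⟩
          have hEq : M.submatrix f g =
              ((M.submatrix (f ∘ σ) (g ∘ τ)).submatrix σ.symm id).submatrix id τ.symm := by
            ext i j
            simp [Matrix.submatrix_apply]
          rw [hEq, Matrix.det_permute' τ.symm, Matrix.det_permute σ.symm]
          exact Ideal.mul_mem_left _ _ (Ideal.mul_mem_left _ _ key)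
        · obtain ⟨a, b, hab, hne⟩ := Function.not_injective_iff.mp hg
          have : (M.submatrix f g).det = 0 :=
            Matrix.det_zero_of_column_eq hne fun i => by simp [Matrix.submatrix_apply, hab]
          rw [this]; exact Ideal.zero_mem _
      · obtain ⟨a, b, hab, hne⟩ := Function.not_injective_iff.mp hf
        have : (M.submatrix f g).det = 0 :=
          Matrix.det_zero_of_row_eq hne (by funext j; simp [Matrix.submatrix_apply, hab])
        rw [this]; exact Ideal.zero_mem _

/-- Any `n × n` submatrix of the block matrix `[[M,0],[0,1]]`, where at least `k` of the
rows avoid the identity block, has determinant in the ideal of `k` minors of `M`. -/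
lemma block_det_mem {m p r : ℕ} (k : ℕ) (M : Matrix (Fin m) (Fin p) R) :
    ∀ (n : ℕ) (f : Fin n → Fin m ⊕ Fin r) (g : Fin n → Fin p ⊕ Fin r),
      k + (Finset.univ.filter fun i => (f i).isRight).card ≤ n →
      ((Matrix.fromBlocks M 0 0 (1 : Matrix (Fin r) (Fin r) R)).submatrix f g).det ∈
        minorsIdeal M k := by
  intro n
  induction n with
  | zero =>
    intro f g hn
    have hk : k = 0 := by omega
    subst hk
    simpa [Matrix.det_fin_zero] using one_mem_minorsIdeal_zero M
  | succ n ih =>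
    intro f g hn
    by_cases hf : ∃ i, (f i).isRight
    · obtain ⟨i, hi⟩ := hf
      rw [Matrix.det_succ_row _ i]
      refine Ideal.sum_mem _ fun j _ => ?_
      rw [Matrix.submatrix_submatrix]
      refine Ideal.mul_mem_left _ _ (ih _ _ ?_)
      have h1 : (Finset.univ.filter fun i' : Fin n => ((f ∘ i.succAbove) i').isRight).card ≤
          ((Finset.univ.filter fun i' : Fin (n+1) => (f i').isRight).erase i).card := by
        refine Finset.card_le_card_of_injOn (fun i' => i.succAbove i')
          (fun x hx => Finset.mem_erase.mpr
            ⟨Fin.succAbove_ne i x, by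
              simpa using (Finset.mem_filter.mp hx).2⟩)
          (fun a _ b _ h => Fin.succAbove_right_injective h)
      have hmem : i ∈ Finset.univ.filter fun i' : Fin (n+1) => (f i').isRight := by
        simp [hi]
      have h2 := Finset.card_erase_of_mem hmem
      have h3 : 0 < (Finset.univ.filter fun i' : Fin (n+1) => (f i').isRight).card :=
        Finset.card_pos.mpr ⟨i, hmem⟩
      omega
    · push_neg at hf
      by_cases hg : ∃ j, (g j).isRight
      · obtain ⟨j, hj⟩ := hg
        obtain ⟨y, hy⟩ := Sum.isRight_iff.mp hj
        have : ((Matrix.fromBlocks M 0 0 (1 : Matrix (Fin r) (Fin r) R)).submatrix f g).det = 0 := by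
          refine Matrix.det_eq_zero_of_column_eq_zero j fun i => ?_
          obtain ⟨a, ha⟩ := Sum.isLeft_iff.mp (Sum.not_isRight.mp (by simpa using hf i))
          simp [Matrix.submatrix_apply, ha, hy]
        rw [this]; exact Ideal.zero_mem _
      · push_neg at hg
        choose f₀ hf₀ using fun i => Sum.isLeft_iff.mp (Sum.not_isRight.mp (by simpa using hf i))
        choose g₀ hg₀ using fun j => Sum.isLeft_iff.mp (Sum.not_isRight.mp (by simpa using hg j))
        have hEq : (Matrix.fromBlocks M 0 0 (1 : Matrix (Fin r) (Fin r) R)).submatrix f g =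
            M.submatrix f₀ g₀ := by
          ext i j
          rw [Matrix.submatrix_apply, hf₀ i, hg₀ j]
          simp
        rw [hEq]
        exact mem_minorsIdeal_of_maps M k (n+1) (by omega) f₀ g₀

lemma strictMono_append_blocks {k r m : ℕ} {u : Fin k → Fin m} (hu : StrictMono u) :
    StrictMono (Fin.append (fun i => Fin.castAdd r (u i)) (fun j => Fin.natAdd m j)) := by
  intro i j hij
  induction i using Fin.addCases with
  | left i0 =>
    induction j using Fin.addCases with
    | left j0 =>
      simp only [Fin.append_left]
      simp only [Fin.lt_def, Fin.coe_castAdd] at hij ⊢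
      exact hu (show i0 < j0 from hij)
    | right j0 =>
      simp only [Fin.append_left, Fin.append_right, Fin.lt_def, Fin.coe_castAdd, Fin.coe_natAdd]
      have := (u i0).isLt
      omega
  | right i0 =>
    induction j using Fin.addCases with
    | left j0 =>
      exfalso
      simp only [Fin.lt_def, Fin.coe_castAdd, Fin.coe_natAdd] at hij
      have := j0.isLt
      omega
    | right j0 =>
      simp only [Fin.append_right, Fin.lt_def, Fin.coe_natAdd] at hij ⊢
      omega

end Aux

/-- Let `M` be an `m × p` matrix over a commutative ring `R` and let
`N = [[M, 0], [0, I_r]]` be the `(m+r) × (p+r)` block-diagonal matrix with blocks `M`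
and the `r × r` identity.  For `k ≥ 1`, the ideal generated by the
`(k+r) × (k+r)` minors of `N` equals the ideal generated by the `k × k` minors
of `M`. -/
theorem stmt15 {R : Type*} [CommRing R] (m p r k : ℕ) (hk : 1 ≤ k)
    (M : Matrix (Fin m) (Fin p) R) :
    minorsIdeal
      ((Matrix.fromBlocks M 0 0 (1 : Matrix (Fin r) (Fin r) R)).submatrix
        (finSumFinEquiv (m := m) (n := r)).symm (finSumFinEquiv (m := p) (n := r)).symm)
      (k + r) =
    minorsIdeal M k := by
  apply le_antisymm
  · refine Ideal.span_le.mpr ?_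
    rintro x ⟨rs, cs, hrs, hcs, rfl⟩
    rw [Matrix.submatrix_submatrix]
    refine block_det_mem k M (k + r) _ _ ?_
    have hcard : (Finset.univ.filter fun i : Fin (k+r) =>
        ((⇑(finSumFinEquiv (m := m) (n := r)).symm ∘ rs) i).isRight).card ≤ r := by
      have hle := Finset.card_le_card_of_injOn
        (fun i => (finSumFinEquiv (m := m) (n := r)).symm (rs i))
        (s := Finset.univ.filter fun i : Fin (k+r) =>
          ((⇑(finSumFinEquiv (m := m) (n := r)).symm ∘ rs) i).isRight)
        (t := Finset.univ.filter fun x : Fin m ⊕ Fin r => x.isRight)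
        (fun a ha => Finset.mem_filter.mpr ⟨Finset.mem_univ _, by
          simpa using (Finset.mem_filter.mp ha).2⟩)
        (fun a _ b _ h => hrs.injective (finSumFinEquiv.symm.injective h))
      have himg : (Finset.univ.filter fun x : Fin m ⊕ Fin r => x.isRight) =
          Finset.univ.image Sum.inr := by
        ext x; cases x <;> simp
      rw [himg, Finset.card_image_of_injective _ Sum.inr_injective, Finset.card_univ,
        Fintype.card_fin] at hle
      exact hle
    omega
  · refine Ideal.span_le.mpr ?_
    rintro x ⟨rs, cs, hrs, hcs, rfl⟩
    refine Ideal.subset_span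
      ⟨Fin.append (fun i => Fin.castAdd r (rs i)) (fun j => Fin.natAdd m j),
       Fin.append (fun i => Fin.castAdd r (cs i)) (fun j => Fin.natAdd p j),
       strictMono_append_blocks hrs, strictMono_append_blocks hcs, ?_⟩
    rw [Matrix.submatrix_submatrix]
    have hrow : ⇑(finSumFinEquiv (m := m) (n := r)).symm ∘
        Fin.append (fun i => Fin.castAdd r (rs i)) (fun j => Fin.natAdd m j) =
        Sum.map rs id ∘ ⇑(finSumFinEquiv (m := k) (n := r)).symm := by
      funext i
      induction i using Fin.addCases with
      | left i0 =>
        simp [Fin.append_left, finSumFinEquiv_symm_apply_castAdd]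
      | right j0 =>
        simp [Fin.append_right, finSumFinEquiv_symm_apply_natAdd]
    have hcol : ⇑(finSumFinEquiv (m := p) (n := r)).symm ∘
        Fin.append (fun i => Fin.castAdd r (cs i)) (fun j => Fin.natAdd p j) =
        Sum.map cs id ∘ ⇑(finSumFinEquiv (m := k) (n := r)).symm := by
      funext i
      induction i using Fin.addCases with
      | left i0 =>
        simp [Fin.append_left, finSumFinEquiv_symm_apply_castAdd]
      | right j0 =>
        simp [Fin.append_right, finSumFinEquiv_symm_apply_natAdd]
    rw [hrow, hcol, ← Matrix.submatrix_submatrix,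
      Matrix.det_submatrix_equiv_self (finSumFinEquiv (m := k) (n := r)).symm]
    have hblk : (Matrix.fromBlocks M 0 0 (1 : Matrix (Fin r) (Fin r) R)).submatrix
        (Sum.map rs id) (Sum.map cs id) =
        Matrix.fromBlocks (M.submatrix rs cs) 0 0 (1 : Matrix (Fin r) (Fin r) R) := by
      ext i j
      rcases i with i | i <;> rcases j with j | j <;>
        simp [Matrix.submatrix_apply]
    rw [hblk, Matrix.det_fromBlocks_zero₂₁, Matrix.det_one, mul_one]
end

section
/- Let R be a commutative ring and let M be an m × p matrix over R (m, p ≥ 1) with M_{i₀,j₀} = 1 for some indices i₀, j₀. Let N be the (m−1) × (p−1) matrix indexed by the rows i ≠ i₀ and columns j ≠ j₀ with entries N_{i,j} = M_{i,j} − M_{i,j₀}·M_{i₀,j}. Then for every integer k ≥ 1, the ideal of R generated by all (k+1) × (k+1) minors of M equals the ideal of R generated by all k × k minors of N. -/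
section Helpers

open Matrix Finset

variable {R : Type*} [CommRing R] {I J : Type*} [LinearOrder I] [LinearOrder J]

lemma minor_mem {M : Matrix I J R} {k : ℕ} {rs : Fin k → I} {cs : Fin k → J}
    (hr : StrictMono rs) (hc : StrictMono cs) :
    (M.submatrix rs cs).det ∈ minorsIdeal M k :=
  Ideal.subset_span ⟨rs, cs, hr, hc, rfl⟩

/-- The determinant of any square submatrix (with arbitrary, not necessarily monotone,
index maps) lies in the ideal of `k × k` minors. -/
lemma submatrix_det_mem (M : Matrix I J R) {k : ℕ} (rs : Fin k → I) (cs : Fin k → J) :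
    (M.submatrix rs cs).det ∈ minorsIdeal M k := by
  classical
  by_cases hr : Function.Injective rs
  · by_cases hc : Function.Injective cs
    · set σ := Tuple.sort rs with hσdef
      set τ := Tuple.sort cs with hτdef
      have hrs : StrictMono (rs ∘ σ) :=
        (Tuple.monotone_sort rs).strictMono_of_injective (hr.comp σ.injective)
      have hcs : StrictMono (cs ∘ τ) :=
        (Tuple.monotone_sort cs).strictMono_of_injective (hc.comp τ.injective)
      have key : (M.submatrix (rs ∘ ⇑σ) (cs ∘ ⇑τ)).det
          = ((Equiv.Perm.sign σ : ℤ) : R) * ((Equiv.Perm.sign τ : ℤ) : R)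
              * (M.submatrix rs cs).det := by
        rw [← Matrix.submatrix_submatrix]
        have e : (M.submatrix rs cs).submatrix ⇑σ ⇑τ
            = ((M.submatrix rs cs).submatrix id ⇑τ).submatrix ⇑σ id := by
          rw [Matrix.submatrix_submatrix]
          simp
        rw [e, Matrix.det_permute, Matrix.det_permute']
        ring
      rcases Int.units_eq_one_or (Equiv.Perm.sign σ) with hσ | hσ <;>
        rcases Int.units_eq_one_or (Equiv.Perm.sign τ) with hτ | hτ <;>
        simp only [hσ, hτ, Units.val_one, Units.val_neg, Int.cast_one, Int.cast_neg,
          one_mul, neg_mul, mul_one, neg_neg, mul_neg] at key <;>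
        first
        | (rw [← key]; exact minor_mem hrs hcs)
        | (have h1 := minor_mem (M := M) hrs hcs
           rw [key] at h1
           simpa using neg_mem h1)
    · obtain ⟨a, b, hab, hne⟩ := Function.not_injective_iff.mp hc
      have : (M.submatrix rs cs).det = 0 :=
        Matrix.det_zero_of_column_eq hne fun i => by simp [hab]
      rw [this]; exact zero_mem _
  · obtain ⟨a, b, hab, hne⟩ := Function.not_injective_iff.mp hr
    have : (M.submatrix rs cs).det = 0 :=
      Matrix.det_zero_of_row_eq hne (funext fun j => by simp [hab])
    rw [this]; exact zero_mem _

lemma minorsIdeal_transpose (M : Matrix I J R) (k : ℕ) :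
    minorsIdeal Mᵀ k = minorsIdeal M k := by
  unfold minorsIdeal
  congr 1
  ext x
  constructor
  · rintro ⟨rs, cs, h1, h2, rfl⟩
    exact ⟨cs, rs, h2, h1, by rw [← Matrix.transpose_submatrix, Matrix.det_transpose]⟩
  · rintro ⟨rs, cs, h1, h2, rfl⟩
    refine ⟨cs, rs, h2, h1, ?_⟩
    rw [← Matrix.transpose_submatrix, Matrix.det_transpose]

/-- Multilinear expansion of the determinant after adding a multiple of a fixed vector
to every row. -/
lemma det_rows_add_smul {n : Type*} [Fintype n] [DecidableEq n] [LinearOrder n]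
    (B : Matrix n n R) (c : n → R) (w : n → R) :
    (Matrix.of (fun a => B a + c a • w)).det
      = B.det + ∑ a, c a * (B.updateRow a w).det := by
  classical
  set f : (n → R) [⋀^n]→ₗ[R] R := Matrix.detRowAlternating with hf
  have hdet : ∀ A : Matrix n n R, A.det = f A := fun _ => rfl
  set v : n → n → R := fun a => c a • w with hv
  set Bf : n → n → R := fun a => B a with hBf
  have hsplit : (Matrix.of (fun a => B a + c a • w)).det = f (v + Bf) := by
    have e : (v + Bf) = (fun a => B a + c a • w) := by
      funext a b
      simp only [Pi.add_apply, hv, hBf, Pi.smul_apply, smul_eq_mul]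
      ring
    rw [e]
    rfl
  rw [hsplit]
  have hadd := f.toMultilinearMap.map_add_univ v Bf
  simp only [AlternatingMap.coe_multilinearMap] at hadd
  rw [hadd]
  have hzero : ∀ s : Finset n, 1 < s.card → f (s.piecewise v Bf) = 0 := by
    intro s hs
    obtain ⟨a, ha, b, hb, hab⟩ := Finset.one_lt_card.mp hs
    set X := s.piecewise v Bf with hX
    have hXa : X a = c a • w := Finset.piecewise_eq_of_mem _ _ _ ha
    have e1 : f X = c a • f (Function.update X a w) := by
      conv_lhs => rw [← Function.update_eq_self a X, hXa]
      exact f.map_update_smul X a (c a) w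
    set X' := Function.update X a w with hX'
    have hX'b : X' b = c b • w := by
      rw [hX', Function.update_of_ne (Ne.symm hab)]
      exact Finset.piecewise_eq_of_mem _ _ _ hb
    have e2 : f X' = c b • f (Function.update X' b w) := by
      conv_lhs => rw [← Function.update_eq_self b X', hX'b]
      exact f.map_update_smul X' b (c b) w
    have e3 : f (Function.update X' b w) = 0 := by
      apply f.map_eq_zero_of_eq _ _ hab
      rw [Function.update_of_ne hab, Function.update_self, hX', Function.update_self]
    rw [e1, e2, e3, smul_zero, smul_zero]
  have hsingle : ∀ a : n, f (({a} : Finset n).piecewise v Bf)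
      = c a * (B.updateRow a w).det := by
    intro a
    rw [Finset.piecewise_singleton, hv]
    have e := f.map_update_smul Bf a (c a) w
    rw [e]
    have e2 : Function.update Bf a w = B.updateRow a w := rfl
    rw [e2, smul_eq_mul, hdet]
  have hsubset : (Finset.univ.filter (fun s : Finset n => s.card ≤ 1)) ⊆ Finset.univ :=
    Finset.filter_subset _ _
  rw [← Finset.sum_subset hsubset (fun s _ hs => by
    refine hzero s ?_
    simp only [Finset.mem_filter, Finset.mem_univ, true_and, not_le] at hs
    exact hs)]
  have hfilter : (Finset.univ.filter (fun s : Finset n => s.card ≤ 1))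
      = insert (∅ : Finset n) (Finset.univ.image fun a : n => ({a} : Finset n)) := by
    ext s
    simp only [Finset.mem_filter, Finset.mem_univ, true_and, Finset.mem_insert,
      Finset.mem_image]
    constructor
    · intro hcard
      have : s.card = 0 ∨ s.card = 1 := by omega
      rcases this with h0 | h1
      · exact Or.inl (Finset.card_eq_zero.mp h0)
      · obtain ⟨a, rfl⟩ := Finset.card_eq_one.mp h1
        exact Or.inr ⟨a, rfl⟩
    · rintro (rfl | ⟨a, rfl⟩) <;> simp
  have hnotmem : (∅ : Finset n) ∉ Finset.univ.image (fun a : n => ({a} : Finset n)) := by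
    rw [Finset.mem_image]
    rintro ⟨a, -, habs⟩
    exact Finset.singleton_ne_empty a habs
  rw [hfilter, Finset.sum_insert hnotmem,
    Finset.sum_image (fun a _ b _ hab => Finset.singleton_injective hab)]
  rw [Finset.piecewise_empty]
  have eB : f Bf = B.det := rfl
  rw [eB]
  congr 1
  exact Finset.sum_congr rfl fun a _ => hsingle a

/-- Adding multiples of a fixed row to the rows of a matrix can only shrink the ideal
of minors. -/
lemma rowop_le (B : Matrix I J R) (i₁ : I) (t : I → R) (k : ℕ) :
    minorsIdeal (Matrix.of fun i j => B i j + t i * B i₁ j) k ≤ minorsIdeal B k := by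
  classical
  refine Ideal.span_le.2 ?_
  rintro x ⟨rs, cs, hr, hc, rfl⟩
  have e : (Matrix.of fun i j => B i j + t i * B i₁ j).submatrix rs cs
      = Matrix.of (fun a => (B.submatrix rs cs) a + (t (rs a)) • fun b => B i₁ (cs b)) := by
    ext a b
    simp [Matrix.submatrix_apply, mul_comm]
  rw [e, det_rows_add_smul]
  refine add_mem (minor_mem hr hc) (Ideal.sum_mem _ fun a _ => ?_)
  have e2 : (B.submatrix rs cs).updateRow a (fun b => B i₁ (cs b))
      = B.submatrix (Function.update rs a i₁) cs := by
    ext a' b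
    rcases eq_or_ne a' a with rfl | hne
    · simp
    · rw [Matrix.updateRow_ne hne, Matrix.submatrix_apply, Matrix.submatrix_apply,
        Function.update_of_ne hne]
  rw [e2]
  exact Ideal.mul_mem_left _ _ (submatrix_det_mem B _ _)

/-- Adding multiples of a fixed column to the columns of a matrix can only shrink the
ideal of minors. -/
lemma colop_le (B : Matrix I J R) (j₁ : J) (t : J → R) (k : ℕ) :
    minorsIdeal (Matrix.of fun i j => B i j + t j * B i j₁) k ≤ minorsIdeal B k := by
  have e : (Matrix.of fun i j => B i j + t j * B i j₁)ᵀ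
      = Matrix.of fun j i => Bᵀ j i + t j * Bᵀ j₁ i := by
    ext j i
    simp [Matrix.transpose_apply]
  calc minorsIdeal (Matrix.of fun i j => B i j + t j * B i j₁) k
      = minorsIdeal (Matrix.of fun i j => B i j + t j * B i j₁)ᵀ k :=
        (minorsIdeal_transpose _ _).symm
    _ = minorsIdeal (Matrix.of fun j i => Bᵀ j i + t j * Bᵀ j₁ i) k := by rw [e]
    _ ≤ minorsIdeal Bᵀ k := rowop_le Bᵀ j₁ t k
    _ = minorsIdeal B k := minorsIdeal_transpose _ _

/-- Laplace expansion along a row having a single nonzero entry, equal to `1`. -/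
lemma pivot_det {m p : ℕ} (A : Matrix (Fin m) (Fin p) R) (i₀ : Fin m) (j₀ : Fin p)
    (hpivot : A i₀ j₀ = 1) (hrow : ∀ j, j ≠ j₀ → A i₀ j = 0)
    {k : ℕ} (rs : Fin (k + 1) → Fin m) (cs : Fin (k + 1) → Fin p)
    (hc : Function.Injective cs) (a₀ b₀ : Fin (k + 1))
    (ha : rs a₀ = i₀) (hb : cs b₀ = j₀) :
    (A.submatrix rs cs).det
      = (-1 : R) ^ ((a₀ : ℕ) + (b₀ : ℕ))
          * (A.submatrix (rs ∘ a₀.succAbove) (cs ∘ b₀.succAbove)).det := by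
  rw [Matrix.det_succ_row _ a₀, Finset.sum_eq_single b₀]
  · rw [Matrix.submatrix_apply, ha, hb, hpivot, mul_one, Matrix.submatrix_submatrix]
  · intro b _ hbne
    have hcb : cs b ≠ j₀ := fun hcb => hbne (hc (hcb.trans hb.symm))
    rw [Matrix.submatrix_apply, ha, hrow _ hcb, mul_zero, zero_mul]
  · intro habs
    exact absurd (Finset.mem_univ b₀) habs

/-- A `(k+1) × (k+1)` minor lies in the ideal generated by the `k × k` minors. -/
lemma det_mem_minors_pred {k : ℕ} (A : Matrix I J R) (rs : Fin (k + 1) → I)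
    (cs : Fin (k + 1) → J) :
    (A.submatrix rs cs).det ∈ minorsIdeal A k := by
  rw [Matrix.det_succ_row_zero]
  refine Ideal.sum_mem _ fun b _ => ?_
  rw [Matrix.submatrix_submatrix]
  exact Ideal.mul_mem_left _ _ (submatrix_det_mem A _ _)

end Helpers

/-- Let `M` be an `m × p` matrix over a commutative ring `R` with
`M i₀ j₀ = 1`, and let `N` be the `(m-1) × (p-1)` matrix indexed by the rows `i ≠ i₀`
and columns `j ≠ j₀` with entries `N i j = M i j - M i j₀ * M i₀ j`.  Then for every
`k ≥ 1`, the ideal generated by the `(k+1) × (k+1)` minors of `M` equals the ideal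
generated by the `k × k` minors of `N`. -/
theorem stmt16 {R : Type*} [CommRing R] (m p : ℕ) (hm : 1 ≤ m) (hp : 1 ≤ p)
    (M : Matrix (Fin m) (Fin p) R) (i₀ : Fin m) (j₀ : Fin p) (h : M i₀ j₀ = 1)
    (N : Matrix {i : Fin m // i ≠ i₀} {j : Fin p // j ≠ j₀} R)
    (hN : ∀ i j, N i j = M i.1 j.1 - M i.1 j₀ * M i₀ j.1)
    (k : ℕ) (hk : 1 ≤ k) :
    minorsIdeal M (k + 1) = minorsIdeal N k := by
  classical
  set t : Fin m → R := fun i => if i = i₀ then 0 else -M i j₀ with ht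
  set M₁ : Matrix (Fin m) (Fin p) R := Matrix.of (fun i j => M i j + t i * M i₀ j) with hM₁
  set c : Fin p → R := fun j => if j = j₀ then 0 else -M i₀ j with hc
  set M₂ : Matrix (Fin m) (Fin p) R := Matrix.of (fun i j => M₁ i j + c j * M₁ i j₀) with hM₂
  have hM₁row : ∀ j, M₁ i₀ j = M i₀ j := fun j => by simp [hM₁, ht]
  have hM₁col : ∀ i, M₁ i j₀ = if i = i₀ then 1 else 0 := by
    intro i
    rcases eq_or_ne i i₀ with rfl | hi
    · simp [hM₁, ht, h]
    · simp [hM₁, ht, hi, h]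
  have hM₁pivot : M₁ i₀ j₀ = 1 := by rw [hM₁col]; simp
  have hM₁colzero : ∀ i, i ≠ i₀ → M₁ i j₀ = 0 := by
    intro i hi
    rw [hM₁col, if_neg hi]
  have hM₂pivot : M₂ i₀ j₀ = 1 := by
    show M₁ i₀ j₀ + c j₀ * M₁ i₀ j₀ = 1
    rw [hM₁pivot, hc]
    simp
  have hM₂row : ∀ j, j ≠ j₀ → M₂ i₀ j = 0 := by
    intro j hj
    show M₁ i₀ j + c j * M₁ i₀ j₀ = 0
    rw [hM₁pivot, hM₁row, hc]
    simp only [if_neg hj]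
    ring
  have hM₂col : ∀ i, i ≠ i₀ → M₂ i j₀ = 0 := by
    intro i hi
    show M₁ i j₀ + c j₀ * M₁ i j₀ = 0
    rw [hM₁colzero i hi]
    ring
  have hM₂N : ∀ (i : Fin m) (hi : i ≠ i₀) (j : Fin p) (hj : j ≠ j₀),
      M₂ i j = N ⟨i, hi⟩ ⟨j, hj⟩ := by
    intro i hi j hj
    rw [hN]
    show M₁ i j + c j * M₁ i j₀ = _
    rw [hM₁colzero i hi]
    show (M i j + t i * M i₀ j) + c j * 0 = _
    rw [ht]
    simp only [if_neg hi]
    ring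
  -- Step 1: the minors ideal is unchanged by the row and column operations.
  have step1 : minorsIdeal M (k + 1) = minorsIdeal M₂ (k + 1) := by
    have l1 : minorsIdeal M₁ (k + 1) ≤ minorsIdeal M (k + 1) := by
      rw [hM₁]; exact rowop_le M i₀ t (k + 1)
    have l2 : minorsIdeal M (k + 1) ≤ minorsIdeal M₁ (k + 1) := by
      have e : M = Matrix.of fun i j => M₁ i j + (fun i => -t i) i * M₁ i₀ j := by
        ext i j
        rw [Matrix.of_apply, hM₁row]
        show M i j = (M i j + t i * M i₀ j) + -t i * M i₀ j
        ring
      have := rowop_le M₁ i₀ (fun i => -t i) (k + 1)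
      rwa [← e] at this
    have l3 : minorsIdeal M₂ (k + 1) ≤ minorsIdeal M₁ (k + 1) := by
      rw [hM₂]; exact colop_le M₁ j₀ c (k + 1)
    have l4 : minorsIdeal M₁ (k + 1) ≤ minorsIdeal M₂ (k + 1) := by
      have hM₂colj₀ : ∀ i, M₂ i j₀ = M₁ i j₀ := by
        intro i
        simp [hM₂, hc]
      have e : M₁ = Matrix.of fun i j => M₂ i j + (fun j => -c j) j * M₂ i j₀ := by
        ext i j
        rw [Matrix.of_apply, hM₂colj₀]
        show M₁ i j = (M₁ i j + c j * M₁ i j₀) + -c j * M₁ i j₀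
        ring
      have := colop_le M₂ j₀ (fun j => -c j) (k + 1)
      rwa [← e] at this
    exact le_antisymm (le_trans l2 (le_trans l4 (le_refl _))) (le_trans l3 l1)
  rw [step1]
  -- Step 2: relate the minors of the pivoted matrix `M₂` with those of `N`.
  apply le_antisymm
  · refine Ideal.span_le.2 ?_
    rintro x ⟨rs, cs, hr, hcmono, rfl⟩
    by_cases hi : ∃ a, rs a = i₀
    · obtain ⟨a₀, ha₀⟩ := hi
      by_cases hj : ∃ b, cs b = j₀
      · obtain ⟨b₀, hb₀⟩ := hj
        rw [pivot_det M₂ i₀ j₀ hM₂pivot hM₂row rs cs hcmono.injective a₀ b₀ ha₀ hb₀]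
        have hrs' : ∀ x : Fin k, rs (a₀.succAbove x) ≠ i₀ := fun x hx =>
          Fin.succAbove_ne a₀ x (hr.injective (hx.trans ha₀.symm))
        have hcs' : ∀ x : Fin k, cs (b₀.succAbove x) ≠ j₀ := fun x hx =>
          Fin.succAbove_ne b₀ x (hcmono.injective (hx.trans hb₀.symm))
        set rs' : Fin k → {i : Fin m // i ≠ i₀} :=
          fun x => ⟨rs (a₀.succAbove x), hrs' x⟩ with hrs'def
        set cs' : Fin k → {j : Fin p // j ≠ j₀} :=
          fun x => ⟨cs (b₀.succAbove x), hcs' x⟩ with hcs'def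
        have hkey : M₂.submatrix (rs ∘ a₀.succAbove) (cs ∘ b₀.succAbove)
            = N.submatrix rs' cs' := by
          ext x y
          exact hM₂N _ (hrs' x) _ (hcs' y)
        have hrsmono : StrictMono rs' := fun x y hxy =>
          Subtype.mk_lt_mk.2 (hr ((Fin.strictMono_succAbove a₀) hxy))
        have hcsmono : StrictMono cs' := fun x y hxy =>
          Subtype.mk_lt_mk.2 (hcmono ((Fin.strictMono_succAbove b₀) hxy))
        rw [hkey]
        exact Ideal.mul_mem_left _ _ (minor_mem hrsmono hcsmono)
      · push_neg at hj
        have hzero : (M₂.submatrix rs cs).det = 0 :=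
          Matrix.det_eq_zero_of_row_eq_zero a₀ fun b => by
            rw [Matrix.submatrix_apply, ha₀]
            exact hM₂row _ (hj b)
        rw [hzero]
        exact zero_mem _
    · push_neg at hi
      by_cases hj : ∃ b, cs b = j₀
      · obtain ⟨b₀, hb₀⟩ := hj
        have hzero : (M₂.submatrix rs cs).det = 0 :=
          Matrix.det_eq_zero_of_column_eq_zero b₀ fun a => by
            rw [Matrix.submatrix_apply, hb₀]
            exact hM₂col _ (hi a)
        rw [hzero]
        exact zero_mem _
      · push_neg at hj
        set rs' : Fin (k + 1) → {i : Fin m // i ≠ i₀} := fun x => ⟨rs x, hi x⟩ with hrs'def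
        set cs' : Fin (k + 1) → {j : Fin p // j ≠ j₀} := fun x => ⟨cs x, hj x⟩ with hcs'def
        have hkey : M₂.submatrix rs cs = N.submatrix rs' cs' := by
          ext x y
          exact hM₂N _ (hi x) _ (hj y)
        rw [hkey]
        exact det_mem_minors_pred N rs' cs'
  · refine Ideal.span_le.2 ?_
    rintro x ⟨rs, cs, hr, hcmono, rfl⟩
    -- extend the row selection by `i₀` and the column selection by `j₀`
    have hrinj : Function.Injective fun a : Fin k => (rs a).1 :=
      fun a b hab => hr.injective (Subtype.ext hab)
    have hcinj : Function.Injective fun b : Fin k => (cs b).1 :=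
      fun a b hab => hcmono.injective (Subtype.ext hab)
    set S' : Finset (Fin m) := Finset.univ.image fun a : Fin k => (rs a).1 with hS'
    set T' : Finset (Fin p) := Finset.univ.image fun b : Fin k => (cs b).1 with hT'
    have hS'card : S'.card = k := by
      rw [hS', Finset.card_image_of_injective _ hrinj, Finset.card_univ, Fintype.card_fin]
    have hT'card : T'.card = k := by
      rw [hT', Finset.card_image_of_injective _ hcinj, Finset.card_univ, Fintype.card_fin]
    have hi₀S' : i₀ ∉ S' := by
      simp only [hS', Finset.mem_image, not_exists]
      rintro a ⟨-, habs⟩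
      exact (rs a).2 habs
    have hj₀T' : j₀ ∉ T' := by
      simp only [hT', Finset.mem_image, not_exists]
      rintro b ⟨-, habs⟩
      exact (cs b).2 habs
    set S : Finset (Fin m) := insert i₀ S' with hS
    set T : Finset (Fin p) := insert j₀ T' with hT
    have hScard : S.card = k + 1 := by
      rw [hS, Finset.card_insert_of_notMem hi₀S', hS'card]
    have hTcard : T.card = k + 1 := by
      rw [hT, Finset.card_insert_of_notMem hj₀T', hT'card]
    set g := S.orderEmbOfFin hScard with hg
    set g' := T.orderEmbOfFin hTcard with hg'
    obtain ⟨a₀, ha₀⟩ : ∃ a₀, g a₀ = i₀ := by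
      have : i₀ ∈ Set.range g := by
        rw [Finset.range_orderEmbOfFin]
        exact Finset.mem_insert_self _ _
      exact this
    obtain ⟨b₀, hb₀⟩ : ∃ b₀, g' b₀ = j₀ := by
      have : j₀ ∈ Set.range g' := by
        rw [Finset.range_orderEmbOfFin]
        exact Finset.mem_insert_self _ _
      exact this
    have hrscomp : (fun x : Fin k => (rs x).1) = ⇑g ∘ a₀.succAbove := by
      have h1 : (fun x : Fin k => (rs x).1) = S'.orderEmbOfFin hS'card :=
        Finset.orderEmbOfFin_unique hS'card
          (fun x => Finset.mem_image_of_mem _ (Finset.mem_univ x))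
          (fun a b hab => Subtype.coe_lt_coe.2 (hr hab))
      have h2 : (⇑g ∘ a₀.succAbove) = S'.orderEmbOfFin hS'card := by
        refine Finset.orderEmbOfFin_unique hS'card (fun x => ?_)
          (g.strictMono.comp (Fin.strictMono_succAbove a₀))
        have hmem : g (a₀.succAbove x) ∈ S := Finset.orderEmbOfFin_mem S hScard _
        have hne : g (a₀.succAbove x) ≠ i₀ := by
          rw [← ha₀]
          exact fun habs => Fin.succAbove_ne a₀ x (g.injective habs)
        rcases Finset.mem_insert.mp hmem with h' | h'
        · exact absurd h' hne
        · exact h'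
      rw [h1, h2]
    have hcscomp : (fun x : Fin k => (cs x).1) = ⇑g' ∘ b₀.succAbove := by
      have h1 : (fun x : Fin k => (cs x).1) = T'.orderEmbOfFin hT'card :=
        Finset.orderEmbOfFin_unique hT'card
          (fun x => Finset.mem_image_of_mem _ (Finset.mem_univ x))
          (fun a b hab => Subtype.coe_lt_coe.2 (hcmono hab))
      have h2 : (⇑g' ∘ b₀.succAbove) = T'.orderEmbOfFin hT'card := by
        refine Finset.orderEmbOfFin_unique hT'card (fun x => ?_)
          (g'.strictMono.comp (Fin.strictMono_succAbove b₀))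
        have hmem : g' (b₀.succAbove x) ∈ T := Finset.orderEmbOfFin_mem T hTcard _
        have hne : g' (b₀.succAbove x) ≠ j₀ := by
          rw [← hb₀]
          exact fun habs => Fin.succAbove_ne b₀ x (g'.injective habs)
        rcases Finset.mem_insert.mp hmem with h' | h'
        · exact absurd h' hne
        · exact h'
      rw [h1, h2]
    have hdet := pivot_det M₂ i₀ j₀ hM₂pivot hM₂row ⇑g ⇑g' g'.injective a₀ b₀ ha₀ hb₀
    have hkey : M₂.submatrix (⇑g ∘ a₀.succAbove) (⇑g' ∘ b₀.succAbove)
        = N.submatrix rs cs := by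
      ext x y
      have hx : (⇑g ∘ a₀.succAbove) x = (rs x).1 := (congrFun hrscomp x).symm
      have hy : (⇑g' ∘ b₀.succAbove) y = (cs y).1 := (congrFun hcscomp y).symm
      rw [Matrix.submatrix_apply, hx, hy, Matrix.submatrix_apply]
      rw [hM₂N _ (rs x).2 _ (cs y).2]
    rw [hkey] at hdet
    have hgen : (M₂.submatrix ⇑g ⇑g').det ∈ minorsIdeal M₂ (k + 1) :=
      minor_mem g.strictMono g'.strictMono
    rcases Nat.even_or_odd ((a₀ : ℕ) + (b₀ : ℕ)) with he | he
    · rw [he.neg_one_pow, one_mul] at hdet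
      rwa [← hdet]
    · rw [he.neg_one_pow] at hdet
      have : (N.submatrix rs cs).det = -(M₂.submatrix ⇑g ⇑g').det := by
        rw [hdet]; ring
      rw [this]
      exact neg_mem hgen
end
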